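/- arXiv:2511.04669 — 4 statements merged into one kernel-verified Lean document; each statement's English description precedes it below -/
import Mathlib

section
/- For a function f : {-1,1}^n → ℝ, the following are equivalent: (1) f(x) = 0 for all x with an even number of -1 coordinates; (2) for every S ⊆ [n], the Fourier coefficient f̂(S) equals −f̂(S̄), where S̄ is the complement of S. -/
open Finset

noncomputable section

/-- sign of a bit: `true` ↦ -1 (representing the bit -1), `false` ↦ 1. -/
def bsgn (b : Bool) : ℝ := if b then -1 else 1

/-- character χ_S(x) = ∏_{i ∈ S} x_i on the cube {-1,1}^n. -/
def chiCube {n : ℕ} (S : Finset (Fin n)) (x : Fin n → Bool) : ℝ := ∏ i ∈ S, bsgn (x i)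

/-- expectation under the uniform distribution on a finite type. -/
def expec {α : Type*} [Fintype α] (f : α → ℝ) : ℝ := (∑ x, f x) / (Fintype.card α)

/-- Fourier coefficient f̂(S) = E_x[f(x)·χ_S(x)]. -/
def fhat {n : ℕ} (f : (Fin n → Bool) → ℝ) (S : Finset (Fin n)) : ℝ :=
  expec fun x => f x * chiCube S x

/-- variance under the uniform distribution. -/
def cubeVar {α : Type*} [Fintype α] (f : α → ℝ) : ℝ :=
  expec (fun x => f x ^ 2) - (expec f) ^ 2

/-- merge: equals `x` on `J` and `z` off `J`. -/
def mergeOn {n : ℕ} (J : Finset (Fin n)) (x z : Fin n → Bool) : Fin n → Bool :=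
  fun i => if i ∈ J then x i else z i

/-!
Since `χ_{Sᶜ} = χ_{[n]} · χ_S` and `χ_{[n]}(x) = (-1)^{|x|}`, the sum `f̂(S) + f̂(Sᶜ)` is the Fourier
coefficient at `S` of `g = f · (1 + χ_{[n]})`, which is `2f` on even-weight points and `0` on
odd-weight ones. So (2) says that every Fourier coefficient of `g` vanishes, which by Fourier
inversion means `g = 0`, i.e. (1).
-/

lemma bsgn_mul_self (b : Bool) : bsgn b * bsgn b = 1 := by
  cases b <;> simp [bsgn]

section Characters

variable {n : ℕ}

lemma chiCube_mul_self (S : Finset (Fin n)) (x : Fin n → Bool) :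
    chiCube S x * chiCube S x = 1 := by
  simp [chiCube, ← prod_mul_distrib, bsgn_mul_self]

lemma chiCube_compl (S : Finset (Fin n)) (x : Fin n → Bool) :
    chiCube Sᶜ x = chiCube univ x * chiCube S x := by
  calc chiCube Sᶜ x = chiCube S x * chiCube S x * chiCube Sᶜ x := by
        rw [chiCube_mul_self, one_mul]
    _ = chiCube univ x * chiCube S x := by
        rw [mul_assoc, chiCube, chiCube, chiCube, prod_mul_prod_compl, mul_comm]

lemma chiCube_univ (x : Fin n → Bool) :
    chiCube univ x = (-1 : ℝ) ^ (univ.filter fun i => x i).card := by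
  simp only [chiCube, bsgn]
  rw [prod_ite, prod_const, prod_const, one_pow, mul_one]

lemma sum_chiCube_mul_chiCube (x y : Fin n → Bool) :
    ∑ S : Finset (Fin n), chiCube S x * chiCube S y = if x = y then (2 : ℝ) ^ n else 0 := by
  have hprod : ∑ S : Finset (Fin n), chiCube S x * chiCube S y
      = ∏ i, (bsgn (x i) * bsgn (y i) + 1) := by
    rw [prod_add, ← powerset_univ]
    refine sum_congr rfl fun S _ => ?_
    simp [chiCube, prod_mul_distrib]
  rw [hprod]
  split_ifs with hxy
  · subst hxy
    simp [bsgn_mul_self, one_add_one_eq_two]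
  · obtain ⟨i, hi⟩ : ∃ i, x i ≠ y i := Function.ne_iff.mp hxy
    refine prod_eq_zero (mem_univ i) ?_
    revert hi
    cases x i <;> cases y i <;> simp [bsgn]

end Characters

section Fourier

variable {n : ℕ}

theorem sum_fhat_mul_chiCube (g : (Fin n → Bool) → ℝ) (y : Fin n → Bool) :
    ∑ S : Finset (Fin n), fhat g S * chiCube S y = g y := by
  have hcard : (Fintype.card (Fin n → Bool) : ℝ) = 2 ^ n := by simp
  simp only [fhat, expec, hcard, div_mul_eq_mul_div, ← sum_div, sum_mul]
  rw [sum_comm]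
  simp only [mul_assoc, ← mul_sum, sum_chiCube_mul_chiCube, mul_ite, mul_zero, sum_ite_eq',
    mem_univ, if_true]
  field_simp

theorem fhat_eq_zero_iff (g : (Fin n → Bool) → ℝ) : (∀ S, fhat g S = 0) ↔ g = 0 := by
  refine ⟨fun h => funext fun y => ?_, fun h S => by simp [h, fhat, expec]⟩
  simp [← sum_fhat_mul_chiCube g y, h]

lemma fhat_add_fhat_compl (f : (Fin n → Bool) → ℝ) (S : Finset (Fin n)) :
    fhat f S + fhat f Sᶜ = fhat (fun x => f x * (1 + chiCube univ x)) S := by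
  simp only [fhat, expec, ← add_div, ← sum_add_distrib, chiCube_compl]
  congr 1
  exact sum_congr rfl fun x _ => by ring

end Fourier

lemma mul_one_add_neg_one_pow_eq_zero_iff (a : ℝ) (k : ℕ) :
    a * (1 + (-1) ^ k) = 0 ↔ (Even k → a = 0) := by
  rcases Nat.even_or_odd k with hk | hk
  · simp [hk, hk.neg_one_pow, one_add_one_eq_two]
  · simp [hk.neg_one_pow, Nat.not_even_iff_odd.mpr hk]

theorem stmt_0 (n : ℕ) (f : (Fin n → Bool) → ℝ) :
    (∀ x : Fin n → Bool, Even ((univ.filter fun i => x i)).card → f x = 0) ↔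
      (∀ S : Finset (Fin n), fhat f S = - fhat f Sᶜ) := by
  simp only [eq_neg_iff_add_eq_zero, fhat_add_fhat_compl, fhat_eq_zero_iff, funext_iff,
    Pi.zero_apply, chiCube_univ, mul_one_add_neg_one_pow_eq_zero_iff]
end
end

section
/- Let f : {-1,1}^n → ℝ be an odd function (f(−x) = −f(x) for all x) and not identically zero. Then there exists x ∈ {-1,1}^n and i ∈ [n] such that the one-variable restriction of f fixing all coordinates except i consistently with x has variance at least ‖f‖_∞²/n². Consequently, max over all such single-variable subcube restrictions of the standard deviation is at least ‖f‖_∞/n. -/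
open Finset

noncomputable section

theorem stmt_9 (n : ℕ) (f : (Fin n → Bool) → ℝ)
    (hodd : ∀ x, f (fun i => !(x i)) = - f x) (hne : f ≠ 0) (M : ℝ)
    (hM : M = univ.sup' Finset.univ_nonempty fun x : Fin n → Bool => |f x|) :
    ∃ (x : Fin n → Bool) (i : Fin n),
      (f x - f (Function.update x i (!(x i)))) ^ 2 / 4 ≥ M ^ 2 / n ^ 2 ∧
      Real.sqrt ((f x - f (Function.update x i (!(x i)))) ^ 2 / 4) ≥ M / n := by

  have hn : 0 < n := by
    rcases Nat.eq_zero_or_pos n with h0 | h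
    · exfalso
      apply hne
      funext x
      have hx : (fun i => !(x i)) = x := by
        funext i; exact absurd i.2 (by omega)
      have := hodd x
      rw [hx] at this
      show f x = 0
      linarith
    · exact h
  have hnR : (0:ℝ) < n := by exact_mod_cast hn
  obtain ⟨x₀, -, hx₀⟩ := Finset.exists_mem_eq_sup' (Finset.univ_nonempty)
    (fun x : Fin n → Bool => |f x|)
  have hMeq : M = |f x₀| := by rw [hM]; exact hx₀
  have hMle : ∀ x, |f x| ≤ M := fun x => hM ▸ Finset.le_sup' (fun x => |f x|) (mem_univ x)
  have hMpos : 0 < M := by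
    obtain ⟨z, hz⟩ := Function.ne_iff.mp hne
    have h1 : 0 < |f z| := abs_pos.mpr hz
    exact lt_of_lt_of_le h1 (hMle z)
  set y : ℕ → Fin n → Bool := fun k i => if i.val < k then !(x₀ i) else x₀ i with hy
  have hstep : ∀ k (hk : k < n),
      y (k+1) = Function.update (y k) ⟨k, hk⟩ (!(y k ⟨k, hk⟩)) := by
    intro k hk
    funext i
    by_cases hik : i = ⟨k, hk⟩
    · subst hik
      simp [y, Function.update]
    · have hiv : i.val ≠ k := fun h => hik (Fin.ext h)
      rw [Function.update_of_ne hik]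
      simp only [y]
      by_cases h1 : i.val < k
      · simp [h1, Nat.lt_succ_of_lt h1]
      · have h2 : ¬ i.val < k + 1 := by omega
        simp [h1, h2]
  have key : ∃ (x : Fin n → Bool) (i : Fin n),
      2 * M / n ≤ |f x - f (Function.update x i (!(x i)))| := by
    by_contra hcon
    push_neg at hcon
    have htel : ∑ k ∈ Finset.range n, (f (y k) - f (y (k+1))) = f (y 0) - f (y n) :=
      Finset.sum_range_sub' (fun k => f (y k)) n
    have hy0 : y 0 = x₀ := by funext i; simp [y]
    have hyn : y n = fun i => !(x₀ i) := by funext i; simp [y, i.2]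
    rw [hy0, hyn, hodd] at htel
    have hb : |∑ k ∈ Finset.range n, (f (y k) - f (y (k+1)))| ≤
        ∑ k ∈ Finset.range n, |f (y k) - f (y (k+1))| :=
      Finset.abs_sum_le_sum_abs _ _
    have hlt : ∑ k ∈ Finset.range n, |f (y k) - f (y (k+1))| <
        ∑ _k ∈ Finset.range n, (2 * M / n) := by
      refine Finset.sum_lt_sum_of_nonempty (Finset.nonempty_range_iff.mpr hn.ne') ?_
      intro k hk
      have hkn := Finset.mem_range.mp hk
      rw [hstep k hkn]
      exact hcon (y k) ⟨k, hkn⟩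
    have hsum : ∑ _k ∈ Finset.range n, (2 * M / n) = 2 * M := by
      rw [Finset.sum_const, Finset.card_range, nsmul_eq_mul]
      field_simp
    have h2M : |f x₀ - - f x₀| = 2 * M := by
      rw [hMeq]
      rw [show f x₀ - - f x₀ = 2 * f x₀ by ring, abs_mul]
      simp
    rw [htel, h2M] at hb
    rw [hsum] at hlt
    linarith
  obtain ⟨x, i, hxi⟩ := key
  refine ⟨x, i, ?_⟩
  have h1 : M / n ≤ |f x - f (Function.update x i (!(x i)))| / 2 := by
    have e : 2 * M / (n:ℝ) = 2 * (M / n) := by ring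
    linarith
  refine ⟨?_, ?_⟩
  ·
    have h2 : (M / n) ^ 2 ≤ (|f x - f (Function.update x i (!(x i)))| / 2) ^ 2 :=
      pow_le_pow_left₀ (by positivity) h1 2
    have h3 : (|f x - f (Function.update x i (!(x i)))| / 2) ^ 2 =
        (f x - f (Function.update x i (!(x i)))) ^ 2 / 4 := by
      rw [div_pow, sq_abs]; norm_num
    have h4 : M ^ 2 / (n:ℝ) ^ 2 = (M / n) ^ 2 := by rw [div_pow]
    rw [ge_iff_le, h4, ← h3]
    exact h2
  · have h3 : (f x - f (Function.update x i (!(x i)))) ^ 2 / 4 =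
        (|f x - f (Function.update x i (!(x i)))| / 2) ^ 2 := by
      rw [div_pow, sq_abs]; norm_num
    rw [h3, Real.sqrt_sq (by positivity)]
    linarith
end
end

section
/- Let 1 ≤ k ≤ n and let f : {-1,1}^n → ℝ be defined by f(x) = |x| − n/2, where |x| is the number of −1 coordinates of x. Then f is odd, ‖f‖_∞ = n/2, and for every subset S ⊆ [n] with |S| ≤ k and every fixing b ∈ {-1,1}^{S̄} of the remaining coordinates, the variance of the restriction f_{S|b} equals |S|/4 ≤ k/4. -/
open Finset

noncomputable section

lemma bsgn_not (b : Bool) : bsgn (!b) = - bsgn b := by cases b <;> simp [bsgn]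
lemma flip_inv {n : ℕ} (i : Fin n) :
    Function.Involutive (fun x : Fin n → Bool => Function.update x i (!(x i))) := by
  intro x
  simp [Function.update_idem]

lemma sum_flip_neg {n : ℕ} (i : Fin n) (F : (Fin n → Bool) → ℝ)
    (h : ∀ x, F (Function.update x i (!(x i))) = - F x) : ∑ x, F x = 0 := by
  have h2 : ∑ x, F x = -∑ x, F x := by
    calc ∑ x, F x = ∑ x, F (Function.Involutive.toPerm _ (flip_inv i) x) := (Equiv.sum_comp _ F).symm
    _ = ∑ x, -F x := Finset.sum_congr rfl fun x _ => h x
    _ = -∑ x, F x := by simp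
  linarith

lemma sum_bsgn {n : ℕ} (i : Fin n) : ∑ x : Fin n → Bool, bsgn (x i) = 0 := by
  refine sum_flip_neg i _ fun x => ?_
  simp [bsgn_not]

lemma sum_bsgn_mul {n : ℕ} {i j : Fin n} (hij : i ≠ j) :
    ∑ x : Fin n → Bool, bsgn (x i) * bsgn (x j) = 0 := by
  refine sum_flip_neg i _ fun x => ?_
  rw [Function.update_self, Function.update_of_ne hij.symm, bsgn_not]
  ring

lemma sum_h_sq {n : ℕ} (S : Finset (Fin n)) :
    ∑ x : Fin n → Bool, (∑ i ∈ S, bsgn (x i)) ^ 2 = S.card * 2 ^ n := by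
  have hexp : ∀ x : Fin n → Bool,
      (∑ i ∈ S, bsgn (x i)) ^ 2 = ∑ i ∈ S, ∑ j ∈ S, bsgn (x i) * bsgn (x j) := by
    intro x; rw [sq, Finset.sum_mul_sum]
  simp_rw [hexp]
  rw [Finset.sum_comm]
  have key : ∀ i ∈ S, (∑ x : Fin n → Bool, ∑ j ∈ S, bsgn (x i) * bsgn (x j)) = 2 ^ n := by
    intro i hi
    rw [Finset.sum_comm, Finset.sum_eq_single_of_mem i hi]
    · simp [bsgn_mul_self, Fintype.card_fun]
    · intro j _ hji
      refine sum_flip_neg j _ fun x => ?_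
      rw [Function.update_self, Function.update_of_ne hji.symm, bsgn_not]
      ring
  rw [Finset.sum_congr rfl key, Finset.sum_const, nsmul_eq_mul]

lemma cubeVar_affine {n : ℕ} (S : Finset (Fin n)) (C : ℝ) :
    cubeVar (fun x : Fin n → Bool => C - (∑ i ∈ S, bsgn (x i)) / 2) = (S.card : ℝ) / 4 := by
  have hN : ((Fintype.card (Fin n → Bool) : ℝ)) = 2 ^ n := by
    simp [Fintype.card_fun]
  have hNpos : (0:ℝ) < 2 ^ n := by positivity
  have hH0 : ∑ x : Fin n → Bool, (∑ i ∈ S, bsgn (x i)) = 0 := by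
    rw [Finset.sum_comm]; simp [sum_bsgn]
  have hcardu : ((Finset.univ : Finset (Fin n → Bool)).card : ℝ) = 2 ^ n := by
    rw [Finset.card_univ]; exact_mod_cast hN
  have hsum : ∑ x : Fin n → Bool, (C - (∑ i ∈ S, bsgn (x i)) / 2) = 2 ^ n * C := by
    rw [Finset.sum_sub_distrib, Finset.sum_const, ← Finset.sum_div, hH0, nsmul_eq_mul]
    rw [hcardu]; ring
  have hsq : ∑ x : Fin n → Bool, (C - (∑ i ∈ S, bsgn (x i)) / 2) ^ 2
      = 2 ^ n * C ^ 2 + S.card * 2 ^ n / 4 := by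
    have hpt : ∀ x : Fin n → Bool, (C - (∑ i ∈ S, bsgn (x i)) / 2) ^ 2
        = C ^ 2 - C * (∑ i ∈ S, bsgn (x i)) + (∑ i ∈ S, bsgn (x i)) ^ 2 / 4 := by
      intro x; ring
    rw [Finset.sum_congr rfl fun x _ => hpt x, Finset.sum_add_distrib,
      Finset.sum_sub_distrib, Finset.sum_const, ← Finset.mul_sum, hH0,
      ← Finset.sum_div, sum_h_sq, nsmul_eq_mul, hcardu]
    ring
  simp only [cubeVar, expec, hsum, hsq, hN]
  field_simp
  ring

theorem stmt_10 (n k : ℕ) (hk1 : 1 ≤ k) (hkn : k ≤ n) (f : (Fin n → Bool) → ℝ)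
    (hf : ∀ x, f x = ((univ.filter fun i => x i).card : ℝ) - (n : ℝ) / 2) :
    (∀ x, f (fun i => !(x i)) = - f x) ∧
    (univ.sup' Finset.univ_nonempty fun x : Fin n → Bool => |f x|) = (n : ℝ) / 2 ∧
    ∀ S : Finset (Fin n), S.card ≤ k → ∀ b : Fin n → Bool,
      cubeVar (fun x => f (mergeOn S x b)) = (S.card : ℝ) / 4 ∧
      (S.card : ℝ) / 4 ≤ (k : ℝ) / 4 := by
  have hcardle : ∀ x : Fin n → Bool, (univ.filter fun i => x i).card ≤ n := by
    intro x
    simpa using Finset.card_filter_le univ (fun i => x i)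
  refine ⟨?_, ?_, ?_⟩
  · intro x
    rw [hf, hf]
    have h1 : (univ.filter fun i => !(x i)) = univ \ (univ.filter fun i => x i) := by
      ext i; simp
    rw [h1, Finset.card_sdiff_of_subset (Finset.filter_subset _ _), Finset.card_univ, Fintype.card_fin,
      Nat.cast_sub (hcardle x)]
    ring
  · apply le_antisymm
    · apply Finset.sup'_le
      intro x _
      rw [hf, abs_le]
      have h0 : (0:ℝ) ≤ ((univ.filter fun i => x i).card : ℝ) := by positivity
      have hle : ((univ.filter fun i => x i).card : ℝ) ≤ n := by exact_mod_cast hcardle x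
      constructor <;> linarith
    · refine le_trans ?_ (Finset.le_sup' (fun x : Fin n → Bool => |f x|)
        (Finset.mem_univ fun _ => true))
      have hft : f (fun _ => true) = (n:ℝ)/2 := by
        rw [hf]; simp; ring
      rw [hft, abs_of_nonneg (by positivity)]
  · intro S hS b
    have hSk : ((S.card : ℝ)) ≤ k := by exact_mod_cast hS
    refine ⟨?_, by linarith⟩
    set C : ℝ := (S.card : ℝ)/2 + (((univ \ S).filter fun i => b i).card : ℝ) - (n:ℝ)/2 with hC
    have hg : ∀ x, f (mergeOn S x b) = C - (∑ i ∈ S, bsgn (x i)) / 2 := by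
      intro x
      rw [hf]
      have hsplit : (univ.filter fun i => mergeOn S x b i)
          = (S.filter fun i => x i) ∪ ((univ \ S).filter fun i => b i) := by
        ext i; by_cases hi : i ∈ S <;> simp [mergeOn, hi]
      have hdisj : Disjoint (S.filter fun i => x i) ((univ \ S).filter fun i => b i) :=
        Finset.disjoint_filter_filter (by simp [Finset.disjoint_sdiff])
      rw [hsplit, Finset.card_union_of_disjoint hdisj]
      have hcard : ((S.filter fun i => x i).card : ℝ)
          = (S.card : ℝ)/2 - (∑ i ∈ S, bsgn (x i)) / 2 := by
        rw [Finset.card_filter]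
        push_cast
        have hpt : ∀ i ∈ S, (if x i then (1:ℝ) else 0) = (1 - bsgn (x i))/2 := by
          intro i _; cases h : x i <;> simp [bsgn]
        rw [Finset.sum_congr rfl hpt, ← Finset.sum_div, Finset.sum_sub_distrib,
          Finset.sum_const, nsmul_eq_mul, mul_one]
        ring
      push_cast
      rw [hcard, hC]
      ring
    rw [show (fun x => f (mergeOn S x b)) = fun x => C - (∑ i ∈ S, bsgn (x i)) / 2
      from funext hg]
    exact cubeVar_affine S C
end
end

section
/- Let 1 ≤ k ≤ n and let f : {-1,1}^n → ℝ be odd with ‖f‖_∞ = M > 0. Then there exist a subset T ⊆ [n] with |T| ≤ k and a fixing b ∈ {-1,1}^{T̄} such that Var(f_{T|b}) ≥ M²k/(4n²). -/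
open Finset

noncomputable section

/-!
Suppose every subcube of dimension at most `k` has variance below `θ = M²k/(4n²)`.
By the law of total variance and Bessel's inequality, some coordinate of an `m`-dimensional
subcube can be fixed so as to keep at least an `(m-1)/m` fraction of its variance; iterating,
every `m`-dimensional subcube has variance below `θ · max 1 (m/k)`.

Now shrink the whole cube, whose mean is `0` because `f` is odd, one coordinate at a time
towards a point `x` with `|f x| = M`. By Bessel some coordinate has a degree-one coefficient of
absolute value at most `√(Var/m)`, and fixing it moves the mean by exactly that amount. So the mean travels
the distance `M` from `0` to `f x` in steps of total length at most
`(M/2n) (∑_{m ≤ k} √(k/m) + (n - k)) < (M/2n) (2k + n - k) ≤ M`, a contradiction.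
-/

section Expectation

variable {α : Type*} [Fintype α]

lemma expec_const [Nonempty α] (c : ℝ) : expec (fun _ : α => c) = c := by
  simp [expec]

lemma sq_expec_le_expec_sq (f : α → ℝ) : expec f ^ 2 ≤ expec (fun x => f x ^ 2) := by
  rcases isEmpty_or_nonempty α with _ | _
  · simp [expec]
  have hN : (0 : ℝ) < Fintype.card α := by exact_mod_cast Fintype.card_pos
  have h := sq_sum_le_card_mul_sum_sq (s := univ) (f := f)
  rw [card_univ] at h
  rw [expec, expec, div_pow, div_le_div_iff₀ (by positivity) hN]
  nlinarith

lemma cubeVar_nonneg (f : α → ℝ) : 0 ≤ cubeVar f :=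
  sub_nonneg.2 (sq_expec_le_expec_sq f)

end Expectation

section Cube

variable {n : ℕ}

lemma sum_update_false_add_sum_update_true (G : (Fin n → Bool) → ℝ) (i : Fin n) :
    ∑ x, G (Function.update x i false) + ∑ x, G (Function.update x i true) = 2 * ∑ x, G x := by
  set σ : (Fin n → Bool) → Fin n → Bool := fun x => Function.update x i (!x i)
  have hσ : Function.Involutive σ := fun x => by simp [σ]
  have hpair : ∀ x, G (Function.update x i false) + G (Function.update x i true)
      = G x + G (σ x) := by
    intro x
    have hself : Function.update x i (x i) = x := Function.update_eq_self i x
    cases hx : x i <;> rw [hx] at hself <;> simp [σ, hx, hself, add_comm]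
  rw [← sum_add_distrib, sum_congr rfl fun x _ => hpair x, sum_add_distrib,
    Fintype.sum_bijective σ hσ.bijective (fun x => G (σ x)) G fun _ => rfl]
  ring

lemma expec_eq_avg_update (G : (Fin n → Bool) → ℝ) (i : Fin n) :
    expec G = (expec (fun x => G (Function.update x i false))
      + expec (fun x => G (Function.update x i true))) / 2 := by
  simp only [expec]
  rw [← add_div, sum_update_false_add_sum_update_true]
  ring

lemma expec_eq_zero_of_odd {f : (Fin n → Bool) → ℝ} (hodd : ∀ x, f (fun i => !(x i)) = - f x) :
    expec f = 0 := by
  have hneg : Function.Involutive fun (x : Fin n → Bool) i => !(x i) := fun x => by simp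
  have h : ∑ x, f x = -∑ x, f x := by
    rw [← sum_neg_distrib, ← sum_congr rfl fun x _ => hodd x]
    exact (Fintype.sum_bijective _ hneg.bijective _ f fun _ => rfl).symm
  rw [expec, show ∑ x, f x = 0 by linarith, zero_div]

end Cube

section Subcube

variable {n : ℕ}

def subcubeMean (F : Finset (Fin n)) (b : Fin n → Bool) (H : (Fin n → Bool) → ℝ) : ℝ :=
  expec fun x => H (mergeOn F x b)

def subcubeVar (F : Finset (Fin n)) (b : Fin n → Bool) (H : (Fin n → Bool) → ℝ) : ℝ :=
  cubeVar fun x => H (mergeOn F x b)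

/-- The degree-one Fourier coefficient at `i` of `H` restricted to the subcube `(F, b)`. -/
def subcubeCoeff (i : Fin n) (F : Finset (Fin n)) (b : Fin n → Bool)
    (H : (Fin n → Bool) → ℝ) : ℝ :=
  (subcubeMean (F.erase i) (Function.update b i false) H
    - subcubeMean (F.erase i) (Function.update b i true) H) / 2

variable {F : Finset (Fin n)} {i : Fin n} (b : Fin n → Bool) (H : (Fin n → Bool) → ℝ)

lemma subcubeVar_eq :
    subcubeVar F b H = subcubeMean F b (fun y => H y ^ 2) - subcubeMean F b H ^ 2 := rfl

lemma subcubeVar_nonneg : 0 ≤ subcubeVar F b H := cubeVar_nonneg _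

lemma mergeOn_update_of_mem (hi : i ∈ F) (x : Fin n → Bool) (c : Bool) :
    mergeOn F (Function.update x i c) b = mergeOn (F.erase i) x (Function.update b i c) := by
  ext j
  by_cases hj : j = i
  · subst hj; simp [mergeOn, hi]
  · simp [mergeOn, hj]

@[simp]
lemma subcubeMean_empty : subcubeMean ∅ b H = H b := by
  have h : ∀ x, mergeOn ∅ x b = b := fun x => rfl
  simp [subcubeMean, h, expec_const]

@[simp]
lemma subcubeMean_univ : subcubeMean univ b H = expec H := by
  have h : ∀ x, mergeOn univ x b = x := fun x => by ext; simp [mergeOn]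
  simp [subcubeMean, h]

@[simp]
lemma subcubeVar_empty : subcubeVar ∅ b H = 0 := by
  simp [subcubeVar_eq]

lemma subcubeMean_eq_avg_erase (hi : i ∈ F) :
    subcubeMean F b H = (subcubeMean (F.erase i) (Function.update b i false) H
      + subcubeMean (F.erase i) (Function.update b i true) H) / 2 := by
  rw [subcubeMean, expec_eq_avg_update _ i]
  simp only [mergeOn_update_of_mem b hi, subcubeMean]

/-- The law of total variance along the coordinate `i`. -/
lemma subcubeVar_eq_avg_erase_add (hi : i ∈ F) :
    subcubeVar F b H = (subcubeVar (F.erase i) (Function.update b i false) H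
      + subcubeVar (F.erase i) (Function.update b i true) H) / 2
      + subcubeCoeff i F b H ^ 2 := by
  simp only [subcubeVar_eq, subcubeCoeff, subcubeMean_eq_avg_erase _ _ hi]
  ring

lemma sq_subcubeMean_sub_erase (hi : i ∈ F) :
    (subcubeMean F b H - subcubeMean (F.erase i) b H) ^ 2 = subcubeCoeff i F b H ^ 2 := by
  have hself : Function.update b i (b i) = b := Function.update_eq_self i b
  rw [subcubeMean_eq_avg_erase b H hi, subcubeCoeff]
  cases hb : b i <;> rw [hb] at hself <;> rw [hself] <;> ring

lemma subcubeCoeff_insert {G : Finset (Fin n)} {j : Fin n} (hiG : i ∉ G) (hj : j ∈ G) :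
    subcubeCoeff j (insert i G) b H = (subcubeCoeff j G (Function.update b i false) H
      + subcubeCoeff j G (Function.update b i true) H) / 2 := by
  have hij : j ≠ i := fun h => hiG (h ▸ hj)
  have hi : i ∈ insert i (G.erase j) := mem_insert_self _ _
  have hie : i ∉ G.erase j := fun h => hiG (mem_of_mem_erase h)
  simp only [subcubeCoeff]
  rw [erase_insert_of_ne hij.symm, subcubeMean_eq_avg_erase _ _ hi,
    subcubeMean_eq_avg_erase _ _ hi, erase_insert hie,
    Function.update_comm hij.symm false false b, Function.update_comm hij.symm true false b,
    Function.update_comm hij.symm false true b, Function.update_comm hij.symm true true b]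
  ring

/-- Bessel's inequality for the degree-one coefficients of a subcube restriction. -/
lemma sum_sq_subcubeCoeff_le (F : Finset (Fin n)) :
    ∑ j ∈ F, subcubeCoeff j F b H ^ 2 ≤ subcubeVar F b H := by
  induction F using Finset.induction_on generalizing b with
  | empty => simp
  | @insert i G hiG ih =>
    have hsum : ∑ j ∈ G, subcubeCoeff j (insert i G) b H ^ 2
        ≤ (∑ j ∈ G, subcubeCoeff j G (Function.update b i false) H ^ 2
          + ∑ j ∈ G, subcubeCoeff j G (Function.update b i true) H ^ 2) / 2 := by
      rw [← sum_add_distrib, sum_div]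
      refine sum_le_sum fun j hj => ?_
      rw [subcubeCoeff_insert b H hiG hj]
      nlinarith [sq_nonneg (subcubeCoeff j G (Function.update b i false) H
        - subcubeCoeff j G (Function.update b i true) H)]
    rw [sum_insert hiG, subcubeVar_eq_avg_erase_add b H (mem_insert_self i G), erase_insert hiG]
    linarith [ih (Function.update b i false), ih (Function.update b i true)]

lemma exists_card_mul_sq_subcubeMean_sub_erase_le (hF : F.Nonempty) :
    ∃ i ∈ F, F.card * (subcubeMean F b H - subcubeMean (F.erase i) b H) ^ 2
      ≤ subcubeVar F b H := by
  have hcard : (0 : ℝ) < F.card := by exact_mod_cast hF.card_pos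
  have hsum : ∑ i ∈ F, subcubeCoeff i F b H ^ 2 ≤ ∑ _i ∈ F, subcubeVar F b H / F.card := by
    rw [sum_const, nsmul_eq_mul, mul_div_cancel₀ _ hcard.ne']
    exact sum_sq_subcubeCoeff_le b H F
  obtain ⟨i, hi, hle⟩ := exists_le_of_sum_le hF hsum
  refine ⟨i, hi, ?_⟩
  rwa [sq_subcubeMean_sub_erase b H hi, mul_comm, ← le_div_iff₀ hcard]

lemma abs_subcubeMean_sub_le_sum {V : ℕ → ℝ}
    (hV : ∀ (F : Finset (Fin n)) b, subcubeVar F b H ≤ F.card * V F.card)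
    (F : Finset (Fin n)) : |subcubeMean F b H - H b| ≤ ∑ m ∈ range F.card, √(V (m + 1)) := by
  induction hm : F.card generalizing F with
  | zero => simp [card_eq_zero.1 hm]
  | succ m ih =>
    obtain ⟨i, hi, hle⟩ :=
      exists_card_mul_sq_subcubeMean_sub_erase_le b H (card_pos.1 (by omega : 0 < F.card))
    have hstep : |subcubeMean F b H - subcubeMean (F.erase i) b H| ≤ √(V (m + 1)) := by
      refine Real.abs_le_sqrt (le_of_mul_le_mul_left ?_ (by positivity : (0 : ℝ) < m + 1))
      have := hV F b
      rw [hm] at this hle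
      push_cast at this hle
      linarith
    have hrest := ih (F.erase i) (by rw [card_erase_of_mem hi, hm]; rfl)
    rw [sum_range_succ]
    calc |subcubeMean F b H - H b|
        ≤ |subcubeMean F b H - subcubeMean (F.erase i) b H|
          + |subcubeMean (F.erase i) b H - H b| := abs_sub_le _ _ _
      _ ≤ _ := by linarith

lemma exists_erase_subcubeVar_ge (hF : F.Nonempty) :
    ∃ i ∈ F, ∃ c : Bool, (F.card - 1 : ℝ) * subcubeVar F b H
      ≤ F.card * subcubeVar (F.erase i) (Function.update b i c) H := by
  have hcard : (0 : ℝ) ≤ F.card := Nat.cast_nonneg _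
  set avg : Fin n → ℝ := fun i => (subcubeVar (F.erase i) (Function.update b i false) H
    + subcubeVar (F.erase i) (Function.update b i true) H) / 2
  have htotal : F.card * subcubeVar F b H
      = ∑ i ∈ F, avg i + ∑ i ∈ F, subcubeCoeff i F b H ^ 2 := by
    rw [← nsmul_eq_mul, ← sum_const, ← sum_add_distrib]
    exact sum_congr rfl fun i hi => subcubeVar_eq_avg_erase_add b H hi
  have hsum : ∑ _i ∈ F, (F.card - 1 : ℝ) * subcubeVar F b H ≤ ∑ i ∈ F, F.card * avg i := by
    rw [sum_const, nsmul_eq_mul, ← mul_sum]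
    exact mul_le_mul_of_nonneg_left (by linarith [sum_sq_subcubeCoeff_le b H F]) hcard
  obtain ⟨i, hi, hle⟩ := exists_le_of_sum_le hF hsum
  refine ⟨i, hi, ?_⟩
  rcases le_total (subcubeVar (F.erase i) (Function.update b i false) H)
    (subcubeVar (F.erase i) (Function.update b i true) H) with h | h
  · refine ⟨true, hle.trans (mul_le_mul_of_nonneg_left ?_ hcard)⟩
    simp only [avg]; linarith
  · refine ⟨false, hle.trans (mul_le_mul_of_nonneg_left ?_ hcard)⟩
    simp only [avg]; linarith

lemma exists_card_eq_subcubeVar_ge {k : ℕ} (F : Finset (Fin n)) (hk : k ≤ F.card) :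
    ∃ T : Finset (Fin n), T.card = k ∧ ∃ b' : Fin n → Bool,
      k * subcubeVar F b H ≤ F.card * subcubeVar T b' H := by
  induction hm : F.card generalizing F b with
  | zero =>
    obtain rfl : k = 0 := by omega
    exact ⟨F, by omega, b, by simp⟩
  | succ m ih =>
    rcases (hm ▸ hk).eq_or_lt with hkm | hkm
    · exact ⟨F, by omega, b, by rw [hkm]⟩
    obtain ⟨i, hi, c, hle⟩ := exists_erase_subcubeVar_ge b H (card_pos.1 (by omega : 0 < F.card))
    obtain ⟨T, hT, b', hT'⟩ := ih (Function.update b i c) (F.erase i) (by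
      rw [card_erase_of_mem hi, hm]; omega) (by rw [card_erase_of_mem hi, hm]; rfl)
    refine ⟨T, hT, b', ?_⟩
    rw [hm] at hle
    push_cast at hle hT' ⊢
    have hW := subcubeVar_nonneg b' H (F := T)
    rcases Nat.eq_zero_or_pos m with rfl | hm0
    · obtain rfl : k = 0 := by omega
      simpa using hW
    · have hmR : (0 : ℝ) < m := by exact_mod_cast hm0
      refine le_of_mul_le_mul_left ?_ hmR
      nlinarith [mul_le_mul_of_nonneg_left hle (Nat.cast_nonneg k : (0 : ℝ) ≤ k)]

lemma subcubeVar_le_of_forall_card_le {k : ℕ} (hk : 1 ≤ k) {θ : ℝ}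
    (hsmall : ∀ T : Finset (Fin n), T.card ≤ k → ∀ b, subcubeVar T b H ≤ θ)
    (F : Finset (Fin n)) : subcubeVar F b H ≤ F.card * (θ / ↑(min F.card k)) := by
  rcases le_total F.card k with hF | hF
  · rw [min_eq_left hF]
    rcases F.eq_empty_or_nonempty with rfl | hne
    · simp
    have hcard : (0 : ℝ) < F.card := by exact_mod_cast hne.card_pos
    rw [mul_div_cancel₀ _ hcard.ne']
    exact hsmall F hF b
  · rw [min_eq_right hF]
    obtain ⟨T, hT, b', hle⟩ := exists_card_eq_subcubeVar_ge b H F hF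
    have hkR : (0 : ℝ) < k := by exact_mod_cast hk
    rw [mul_div_assoc', le_div_iff₀ hkR, mul_comm]
    exact hle.trans (mul_le_mul_of_nonneg_left (hsmall T hT.le b') (Nat.cast_nonneg _))

end Subcube

lemma inv_sqrt_succ_le (j : ℕ) : (√(j + 1 : ℝ))⁻¹ ≤ 2 * (√(j + 1 : ℝ) - √j) := by
  have hpos : 0 < √(j + 1 : ℝ) := Real.sqrt_pos.2 (by positivity)
  have hsq₁ := Real.sq_sqrt (by positivity : (0 : ℝ) ≤ j + 1)
  have hsq₀ := Real.sq_sqrt (Nat.cast_nonneg j : (0 : ℝ) ≤ j)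
  rw [inv_eq_one_div, div_le_iff₀ hpos]
  nlinarith [sq_nonneg (√(j + 1 : ℝ) - √j)]

lemma sum_range_inv_sqrt_succ_le {j : ℕ} (hj : 1 ≤ j) :
    ∑ m ∈ range j, (√(m + 1 : ℝ))⁻¹ ≤ 2 * √j - 1 := by
  induction j, hj using Nat.le_induction with
  | base => norm_num
  | succ j _ ih =>
    rw [sum_range_succ]
    push_cast
    linarith [inv_sqrt_succ_le j]

lemma sum_sqrt_div_min_lt {k n : ℕ} (hk : 1 ≤ k) (hkn : k ≤ n) :
    ∑ m ∈ range n, √((k : ℝ) / ↑(min (m + 1) k)) < n + k := by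
  have hlow : ∑ m ∈ range k, √((k : ℝ) / ↑(min (m + 1) k))
      = √k * ∑ m ∈ range k, (√(m + 1 : ℝ))⁻¹ := by
    rw [mul_sum]
    refine sum_congr rfl fun m hm => ?_
    rw [min_eq_left (mem_range.1 hm), Real.sqrt_div' _ (by positivity), div_eq_mul_inv]
    push_cast
    rfl
  have hhigh : ∑ m ∈ Ico k n, √((k : ℝ) / ↑(min (m + 1) k)) = n - k := by
    have hk0 : (k : ℝ) ≠ 0 := by positivity
    rw [sum_congr rfl fun m hm => by
      rw [min_eq_right (by linarith [(mem_Ico.1 hm).1]), div_self hk0, Real.sqrt_one]]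
    simp [Nat.cast_sub hkn]
  have hsqrt : 0 < √(k : ℝ) := Real.sqrt_pos.2 (by positivity)
  have hsq := Real.sq_sqrt (Nat.cast_nonneg k : (0 : ℝ) ≤ k)
  rw [← sum_range_add_sum_Ico _ hkn, hlow, hhigh]
  nlinarith [mul_le_mul_of_nonneg_left (sum_range_inv_sqrt_succ_le hk) hsqrt.le]

theorem stmt_11 (n k : ℕ) (hk1 : 1 ≤ k) (hkn : k ≤ n) (f : (Fin n → Bool) → ℝ)
    (hodd : ∀ x, f (fun i => !(x i)) = - f x) (M : ℝ)
    (hM : M = univ.sup' Finset.univ_nonempty fun x : Fin n → Bool => |f x|)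
    (hMpos : 0 < M) :
    ∃ T : Finset (Fin n), T.card ≤ k ∧
      ∃ b : Fin n → Bool,
        cubeVar (fun x => f (mergeOn T x b)) ≥ M ^ 2 * k / (4 * n ^ 2) := by
  by_contra! hsmall
  set θ : ℝ := M ^ 2 * k / (4 * n ^ 2)
  have hn : (0 : ℝ) < n := by exact_mod_cast hk1.trans hkn
  have hprofile (F : Finset (Fin n)) (b : Fin n → Bool) :=
    subcubeVar_le_of_forall_card_le b f hk1 (fun T hT b => (hsmall T hT b).le) F
  obtain ⟨x₀, -, hx₀⟩ := exists_mem_eq_sup' univ_nonempty fun x => |f x|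
  have hdrift := abs_subcubeMean_sub_le_sum x₀ f (V := fun m => θ / ↑(min m k)) hprofile univ
  rw [subcubeMean_univ, expec_eq_zero_of_odd hodd, zero_sub, abs_neg, ← hx₀, ← hM, card_univ,
    Fintype.card_fin] at hdrift
  have hscale (m : ℕ) : √(θ / ↑(min (m + 1) k)) = M / (2 * n) * √(k / ↑(min (m + 1) k)) := by
    rw [show θ / ↑(min (m + 1) k) = (M / (2 * n)) ^ 2 * (k / ↑(min (m + 1) k)) by ring,
      Real.sqrt_mul (sq_nonneg _), Real.sqrt_sq (by positivity)]
  rw [sum_congr rfl fun m _ => hscale m, ← mul_sum] at hdrift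
  have hsum := sum_sqrt_div_min_lt hk1 hkn
  have hkn' : (k : ℝ) ≤ n := by exact_mod_cast hkn
  have hbound : M / (2 * n) * (n + k) ≤ M := by
    rw [div_mul_eq_mul_div, div_le_iff₀ (by positivity)]
    nlinarith
  linarith [mul_lt_mul_of_pos_left hsum (by positivity : 0 < M / (2 * n))]
end
end
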